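/- arXiv:1401.4585 — 6 statements merged into one kernel-verified Lean document; each statement's English description precedes it below -/
import Mathlib

section
/- Let (A, I, D, σ) be a social choice situation with |A| ≥ 3 satisfying unrestricted domain (UD), independence of irrelevant alternatives (IIA), and weak Pareto (WP). For U ⊆ I, define aD_Ub iff a ≠ b and for all profiles p where every individual in U strictly prefers a to b and every individual outside U strictly prefers b to a, the social outcome strictly prefers a to b. Then for all a, b, c ∈ A with c ≠ a: aD_Ub implies aD_Uc. -/
namespace Arrow

variable {A I : Type*}

/-- Transitivity of a binary relation. -/
def IsTransRel (R : A → A → Prop) : Prop := ∀ a b c, R a b → R b c → R a c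

/-- Connectedness (totality) of a binary relation. -/
def IsConnRel (R : A → A → Prop) : Prop := ∀ a b, R a b ∨ R b a

/-- A weak preference relation: transitive and connected. -/
def IsWeakPref (R : A → A → Prop) : Prop := IsTransRel R ∧ IsConnRel R

/-- The strict part of a preference relation. -/
def strictly (R : A → A → Prop) (a b : A) : Prop := R a b ∧ ¬ R b a

/-- Restriction of a relation to a subset. -/
def restr (R : A → A → Prop) (S : Set A) : S → S → Prop := fun x y => R x.1 y.1

variable (D : Set (I → A → A → Prop)) (σ : (I → A → A → Prop) → (A → A → Prop))

/-- A social choice situation: profiles in the domain consist of weak preference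
relations, and the social choice function produces weak preference relations. -/
def IsSCS : Prop :=
  (∀ p ∈ D, ∀ i, IsWeakPref (p i)) ∧ (∀ p ∈ D, IsWeakPref (σ p))

/-- Unrestricted domain: every weak-preference profile on any three-element
subset of `A` extends to a profile in the domain. -/
def UD : Prop :=
  ∀ a b c : A, ∀ q : I → (({a, b, c} : Set A) → ({a, b, c} : Set A) → Prop),
    (∀ i, IsWeakPref (q i)) → ∃ p ∈ D, ∀ i, restr (p i) ({a, b, c} : Set A) = q i

/-- Independence of irrelevant alternatives. -/
def IIA : Prop :=
  ∀ a b : A, ∀ p ∈ D, ∀ q ∈ D,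
    (∀ i, (p i a b ↔ q i a b) ∧ (p i b a ↔ q i b a)) →
    ((σ p a b ↔ σ q a b) ∧ (σ p b a ↔ σ q b a))

/-- The Pareto principle. -/
def Pareto : Prop :=
  ∀ a b : A, ∀ p ∈ D, (∀ i, strictly (p i) a b) → strictly (σ p) a b

/-- The weak Pareto principle. -/
def WeakPareto : Prop :=
  ∀ a b : A, ∀ p ∈ D, (∀ i, strictly (p i) a b) → σ p a b

/-- `U` is decisive for `a` over `b`. -/
def Decisive (U : Set I) (a b : A) : Prop :=
  a ≠ b ∧ ∀ p ∈ D, (∀ i ∈ U, strictly (p i) a b) → (∀ i ∉ U, strictly (p i) b a) →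
    strictly (σ p) a b

/-- `a E_U b`: whenever all members of `U` strictly prefer `a` to `b`, so does
the social outcome (no constraint outside `U`). -/
def EDecisive (U : Set I) (a b : A) : Prop :=
  ∀ p ∈ D, (∀ i ∈ U, strictly (p i) a b) → strictly (σ p) a b

end Arrow

open Arrow in
theorem stmt_13 {A I : Type*}
    (D : Set (I → A → A → Prop)) (σ : (I → A → A → Prop) → (A → A → Prop))
    (hSCS : IsSCS D σ)
    (h3 : ∃ x y z : A, x ≠ y ∧ x ≠ z ∧ y ≠ z)
    (hUD : UD D) (hIIA : IIA D σ) (hWP : WeakPareto D σ) :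
    ∀ (U : Set I) (a b c : A), c ≠ a → Decisive D σ U a b → Decisive D σ U a c := by
  classical
  rintro U a b c hca ⟨hab, hdec⟩
  by_cases hcb : c = b
  · subst hcb; exact ⟨hab, hdec⟩
  refine ⟨Ne.symm hca, ?_⟩
  intro p hp hU hNU
  -- rank function
  set f : I → A → ℕ := fun i x =>
    if i ∈ U then (if x = a then 0 else if x = b then 1 else 2)
    else (if x = b then 0 else if x = c then 1 else 2) with hf
  have ha : a ∈ ({a, b, c} : Set A) := by simp
  have hb : b ∈ ({a, b, c} : Set A) := by simp
  have hc : c ∈ ({a, b, c} : Set A) := by simp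
  obtain ⟨p', hp', hrestr⟩ := hUD a b c
    (fun i x y => f i x.1 ≤ f i y.1)
    (fun i => ⟨fun x y z h1 h2 => le_trans h1 h2, fun x y => le_total _ _⟩)
  have key : ∀ i, ∀ x ∈ ({a, b, c} : Set A), ∀ y ∈ ({a, b, c} : Set A),
      p' i x y = (f i x ≤ f i y) := by
    intro i x hx y hy
    exact congrFun (congrFun (hrestr i) ⟨x, hx⟩) ⟨y, hy⟩
  have fia : ∀ i ∈ U, f i a = 0 := by intro i hi; simp [hf, hi]
  have fib : ∀ i ∈ U, f i b = 1 := by intro i hi; simp [hf, hi, Ne.symm hab]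
  have fic : ∀ i ∈ U, f i c = 2 := by intro i hi; simp [hf, hi, hca, hcb]
  have gia : ∀ i ∉ U, f i a = 2 := by intro i hi; simp [hf, hi, hab, Ne.symm hca]
  have gib : ∀ i ∉ U, f i b = 0 := by intro i hi; simp [hf, hi]
  have gic : ∀ i ∉ U, f i c = 1 := by intro i hi; simp [hf, hi, hcb]
  have hUab : ∀ i ∈ U, strictly (p' i) a b := by
    intro i hi
    constructor
    · rw [key i a ha b hb, fia i hi, fib i hi]; norm_num
    · rw [key i b hb a ha, fia i hi, fib i hi]; norm_num
  have hNUba : ∀ i ∉ U, strictly (p' i) b a := by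
    intro i hi
    constructor
    · rw [key i b hb a ha, gia i hi, gib i hi]; norm_num
    · rw [key i a ha b hb, gia i hi, gib i hi]; norm_num
  have hbc : ∀ i, strictly (p' i) b c := by
    intro i
    by_cases hi : i ∈ U
    · constructor
      · rw [key i b hb c hc, fib i hi, fic i hi]; norm_num
      · rw [key i c hc b hb, fib i hi, fic i hi]; norm_num
    · constructor
      · rw [key i b hb c hc, gib i hi, gic i hi]; norm_num
      · rw [key i c hc b hb, gib i hi, gic i hi]; norm_num
  have hσab : strictly (σ p') a b := hdec p' hp' hUab hNUba
  have hσbc : σ p' b c := hWP b c p' hp' hbc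
  have htr : IsTransRel (σ p') := (hSCS.2 p' hp').1
  have hσac : strictly (σ p') a c := by
    refine ⟨htr a b c hσab.1 hσbc, fun h => hσab.2 (htr b c a hσbc h)⟩
  have hiia := hIIA a c p' hp' p hp (by
    intro i
    by_cases hi : i ∈ U
    · constructor
      · rw [key i a ha c hc, fia i hi, fic i hi]
        exact iff_of_true (by norm_num) (hU i hi).1
      · rw [key i c hc a ha, fia i hi, fic i hi]
        exact iff_of_false (by norm_num) (hU i hi).2
    · constructor
      · rw [key i a ha c hc, gia i hi, gic i hi]
        exact iff_of_false (by norm_num) (hNU i hi).2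
      · rw [key i c hc a ha, gia i hi, gic i hi]
        exact iff_of_true (by norm_num) (hNU i hi).1)
  exact ⟨hiia.1.mp hσac.1, fun h => hσac.2 (hiia.2.mpr h)⟩
end

section
/- Let (A, I, D, σ) be a social choice situation with |A| ≥ 3 satisfying UD, IIA, and WP. Then local neutrality holds: for all a, b, x, y ∈ A with x ≠ y, if U is decisive for a over b (aD_Ub), then U is decisive for x over y (xD_Uy). -/
open Arrow

section Aux

variable {A I : Type*} (D : Set (I → A → A → Prop)) (σ : (I → A → A → Prop) → (A → A → Prop))

theorem Arrow.transfer (hIIA : IIA D σ) (U : Set I) (x y : A) (hxy : x ≠ y)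
    (p : I → A → A → Prop) (hp : p ∈ D)
    (hU : ∀ i ∈ U, strictly (p i) x y) (hO : ∀ i ∉ U, strictly (p i) y x)
    (hs : strictly (σ p) x y) : Decisive D σ U x y := by
  refine ⟨hxy, fun q hq hU' hO' => ?_⟩
  have h := hIIA x y p hp q hq (fun i => by
    by_cases hi : i ∈ U
    · exact ⟨iff_of_true (hU i hi).1 (hU' i hi).1, iff_of_false (hU i hi).2 (hU' i hi).2⟩
    · exact ⟨iff_of_false (hO i hi).2 (hO' i hi).2, iff_of_true (hO i hi).1 (hO' i hi).1⟩)
  exact ⟨h.1.mp hs.1, fun hyx => hs.2 (h.2.mpr hyx)⟩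

theorem Arrow.build (hUD : UD D) (a b c : A) (g : I → A → ℕ) :
    ∃ p ∈ D, ∀ i, ∀ x ∈ ({a, b, c} : Set A), ∀ y ∈ ({a, b, c} : Set A),
      (p i x y ↔ g i x ≤ g i y) := by
  obtain ⟨p, hpD, hq⟩ := hUD a b c (fun i x y => g i x.1 ≤ g i y.1)
    (fun i => ⟨fun _ _ _ h1 h2 => le_trans h1 h2, fun u v => le_total _ _⟩)
  exact ⟨p, hpD, fun i x hx y hy =>
    iff_of_eq (congrFun (congrFun (hq i) ⟨x, hx⟩) ⟨y, hy⟩)⟩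

theorem Arrow.step1 (hSCS : IsSCS D σ) (hUD : UD D) (hIIA : IIA D σ)
    (hWP : WeakPareto D σ) (U : Set I) (a b c : A) (hca : c ≠ a) (hcb : c ≠ b)
    (hab : Decisive D σ U a b) : Decisive D σ U a c := by
  classical
  have hne : a ≠ b := hab.1
  obtain ⟨p, hpD, hpg⟩ := Arrow.build D hUD a b c (fun i x =>
    if i ∈ U then (if x = a then 0 else if x = b then 1 else 2)
    else (if x = b then 0 else if x = c then 1 else 2))
  have ha : a ∈ ({a, b, c} : Set A) := by simp
  have hb : b ∈ ({a, b, c} : Set A) := by simp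
  have hc : c ∈ ({a, b, c} : Set A) := by simp
  have hstr : ∀ i, ∀ x ∈ ({a, b, c} : Set A), ∀ y ∈ ({a, b, c} : Set A),
      (if i ∈ U then (if x = a then 0 else if x = b then 1 else 2)
        else (if x = b then 0 else if x = c then 1 else 2)) <
      (if i ∈ U then (if y = a then 0 else if y = b then 1 else 2)
        else (if y = b then 0 else if y = c then 1 else 2)) →
      strictly (p i) x y := fun i x hx y hy h =>
    ⟨(hpg i x hx y hy).mpr h.le, fun hyx => absurd ((hpg i y hy x hx).mp hyx) (not_le.mpr h)⟩
  have h1 : strictly (σ p) a b := hab.2 p hpD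
    (fun i hi => hstr i a ha b hb (by simp [hi, hne, hne.symm, hca, hcb, Ne.symm hca, Ne.symm hcb]))
    (fun i hi => hstr i b hb a ha (by simp [hi, hne, hne.symm, hca, hcb, Ne.symm hca, Ne.symm hcb]))
  have h2 : σ p b c := hWP b c p hpD (fun i => by
    by_cases hi : i ∈ U
    · exact hstr i b hb c hc (by simp [hi, hne, hne.symm, hca, hcb, Ne.symm hca, Ne.symm hcb])
    · exact hstr i b hb c hc (by simp [hi, hne, hne.symm, hca, hcb, Ne.symm hca, Ne.symm hcb]))
  have htr := (hSCS.2 p hpD).1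
  refine Arrow.transfer D σ hIIA U a c (Ne.symm hca) p hpD
    (fun i hi => hstr i a ha c hc (by simp [hi, hne, hne.symm, hca, hcb, Ne.symm hca, Ne.symm hcb]))
    (fun i hi => hstr i c hc a ha (by simp [hi, hne, hne.symm, hca, hcb, Ne.symm hca, Ne.symm hcb]))
    ⟨htr a b c h1.1 h2, fun h => h1.2 (htr b c a h2 h)⟩

theorem Arrow.step2 (hSCS : IsSCS D σ) (hUD : UD D) (hIIA : IIA D σ)
    (hWP : WeakPareto D σ) (U : Set I) (a b c : A) (hca : c ≠ a) (hcb : c ≠ b)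
    (hab : Decisive D σ U a b) : Decisive D σ U c b := by
  classical
  have hne : a ≠ b := hab.1
  obtain ⟨p, hpD, hpg⟩ := Arrow.build D hUD a b c (fun i x =>
    if i ∈ U then (if x = c then 0 else if x = a then 1 else 2)
    else (if x = b then 0 else if x = c then 1 else 2))
  have ha : a ∈ ({a, b, c} : Set A) := by simp
  have hb : b ∈ ({a, b, c} : Set A) := by simp
  have hc : c ∈ ({a, b, c} : Set A) := by simp
  have hstr : ∀ i, ∀ x ∈ ({a, b, c} : Set A), ∀ y ∈ ({a, b, c} : Set A),
      (if i ∈ U then (if x = c then 0 else if x = a then 1 else 2)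
        else (if x = b then 0 else if x = c then 1 else 2)) <
      (if i ∈ U then (if y = c then 0 else if y = a then 1 else 2)
        else (if y = b then 0 else if y = c then 1 else 2)) →
      strictly (p i) x y := fun i x hx y hy h =>
    ⟨(hpg i x hx y hy).mpr h.le, fun hyx => absurd ((hpg i y hy x hx).mp hyx) (not_le.mpr h)⟩
  have h1 : strictly (σ p) a b := hab.2 p hpD
    (fun i hi => hstr i a ha b hb (by simp [hi, hne, hne.symm, hca, hcb, Ne.symm hca, Ne.symm hcb]))
    (fun i hi => hstr i b hb a ha (by simp [hi, hne, hne.symm, hca, hcb, Ne.symm hca, Ne.symm hcb]))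
  have h2 : σ p c a := hWP c a p hpD (fun i => by
    by_cases hi : i ∈ U
    · exact hstr i c hc a ha (by simp [hi, hne, hne.symm, hca, hcb, Ne.symm hca, Ne.symm hcb])
    · exact hstr i c hc a ha (by simp [hi, hne, hne.symm, hca, hcb, Ne.symm hca, Ne.symm hcb]))
  have htr := (hSCS.2 p hpD).1
  refine Arrow.transfer D σ hIIA U c b hcb p hpD
    (fun i hi => hstr i c hc b hb (by simp [hi, hne, hne.symm, hca, hcb, Ne.symm hca, Ne.symm hcb]))
    (fun i hi => hstr i b hb c hc (by simp [hi, hne, hne.symm, hca, hcb, Ne.symm hca, Ne.symm hcb]))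
    ⟨htr c a b h2 h1.1, fun h => h1.2 (htr b c a h h2)⟩

end Aux

open Arrow in
theorem stmt_14 {A I : Type*}
    (D : Set (I → A → A → Prop)) (σ : (I → A → A → Prop) → (A → A → Prop))
    (hSCS : IsSCS D σ)
    (h3 : ∃ x y z : A, x ≠ y ∧ x ≠ z ∧ y ≠ z)
    (hUD : UD D) (hIIA : IIA D σ) (hWP : WeakPareto D σ) :
    ∀ (U : Set I) (a b x y : A), x ≠ y → Decisive D σ U a b → Decisive D σ U x y := by
  intro U a b x y hxy hab
  have hne : a ≠ b := hab.1
  obtain ⟨u, v, w, huv, huw, hvw⟩ := h3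
  have third : ∀ s t : A, ∃ c, c ≠ s ∧ c ≠ t := by
    intro s t
    by_cases h1 : u ≠ s ∧ u ≠ t
    · exact ⟨u, h1⟩
    by_cases h2 : v ≠ s ∧ v ≠ t
    · exact ⟨v, h2⟩
    rw [not_and_or, not_ne_iff, not_ne_iff] at h1 h2
    rcases h1 with h1 | h1 <;> rcases h2 with h2 | h2
    · exact absurd (h1.trans h2.symm) huv
    · exact ⟨w, fun h => huw (h1.trans h.symm), fun h => hvw (h2.trans h.symm)⟩
    · exact ⟨w, fun h => hvw (h2.trans h.symm), fun h => huw (h1.trans h.symm)⟩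
    · exact absurd (h1.trans h2.symm) huv
  by_cases hxa : x = a
  · subst hxa
    by_cases hyb : y = b
    · subst hyb; exact hab
    · exact Arrow.step1 D σ hSCS hUD hIIA hWP U x b y (Ne.symm hxy) hyb hab
  · by_cases hxb : x = b
    · subst hxb
      obtain ⟨c, hca, hcb⟩ := third a x
      have hac : Decisive D σ U a c := Arrow.step1 D σ hSCS hUD hIIA hWP U a x c hca hcb hab
      have hbc : Decisive D σ U x c :=
        Arrow.step2 D σ hSCS hUD hIIA hWP U a c x hxa (Ne.symm hcb) hac
      by_cases hyc : y = c
      · subst hyc; exact hbc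
      · exact Arrow.step1 D σ hSCS hUD hIIA hWP U x c y (Ne.symm hxy) hyc hbc
    · have hxb' : Decisive D σ U x b :=
        Arrow.step2 D σ hSCS hUD hIIA hWP U a b x hxa hxb hab
      by_cases hyb : y = b
      · subst hyb; exact hxb'
      · exact Arrow.step1 D σ hSCS hUD hIIA hWP U x b y (Ne.symm hxy) hyb hxb'
end

section
/- Let (A, I, D, σ) be a social choice situation with |A| ≥ 3 satisfying UD, IIA, and WP. Define aE_Ub iff for all profiles p ∈ D in which every individual in U strictly prefers a to b, the social outcome strictly prefers a to b. Then monotonicity holds: for all distinct a, b ∈ A, aD_Ub if and only if aE_Ub. -/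
open Arrow in
private lemma arrow_aux1 {A I : Type*}
    {D : Set (I → A → A → Prop)} {σ : (I → A → A → Prop) → (A → A → Prop)}
    (hSCS : IsSCS D σ) (hUD : UD D) (hIIA : IIA D σ) (hWP : WeakPareto D σ)
    {U : Set I} {x y z : A} (hxy : x ≠ y) (hxz : x ≠ z) (hyz : y ≠ z)
    (hD : Decisive D σ U x y) : EDecisive D σ U x z := by
  classical
  intro p hp h1
  set rnk : A → ℕ := fun u => if u = x then 0 else if u = y then 1 else 2 with hrnk
  have rx : rnk x = 0 := by simp [hrnk]
  have ry : rnk y = 1 := by simp [hrnk, hxy.symm]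
  have rz : rnk z = 2 := by simp [hrnk, hxz.symm, hyz.symm]
  set R : I → A → A → Prop := fun i =>
    if i ∈ U then (fun u v => rnk u ≤ rnk v)
    else (fun u v => u = y ∨ (v ≠ y ∧ p i u v)) with hR
  have hRwp : ∀ i, IsTransRel (R i) ∧ IsConnRel (R i) := by
    intro i
    by_cases hi : i ∈ U
    · simp only [hR, if_pos hi]
      exact ⟨fun a b c => le_trans, fun a b => le_total _ _⟩
    · simp only [hR, if_neg hi]
      obtain ⟨ht, hc⟩ := hSCS.1 p hp i
      constructor
      · rintro a b c (rfl | ⟨hb, hab⟩) hbc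
        · exact Or.inl rfl
        · rcases hbc with rfl | ⟨hcny, hbc⟩
          · exact absurd rfl hb
          · exact Or.inr ⟨hcny, ht _ _ _ hab hbc⟩
      · intro a b
        by_cases ha : a = y
        · exact Or.inl (Or.inl ha)
        by_cases hb : b = y
        · exact Or.inr (Or.inl hb)
        rcases hc a b with h | h
        · exact Or.inl (Or.inr ⟨hb, h⟩)
        · exact Or.inr (Or.inr ⟨ha, h⟩)
  obtain ⟨p', hp', hres⟩ := hUD x y z (fun i => restr (R i) ({x, y, z} : Set A))
    (fun i => ⟨fun a b c hab hbc => (hRwp i).1 _ _ _ hab hbc,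
               fun a b => (hRwp i).2 _ _⟩)
  have hxS : x ∈ ({x, y, z} : Set A) := by simp
  have hyS : y ∈ ({x, y, z} : Set A) := by simp
  have hzS : z ∈ ({x, y, z} : Set A) := by simp
  have key : ∀ i, ∀ u, ∀ hu : u ∈ ({x, y, z} : Set A), ∀ v, ∀ hv : v ∈ ({x, y, z} : Set A),
      p' i u v ↔ R i u v := by
    intro i u hu v hv
    exact iff_of_eq (congrFun (congrFun (hres i) ⟨u, hu⟩) ⟨v, hv⟩)
  -- facts about p'
  have hUxy : ∀ i ∈ U, strictly (p' i) x y := by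
    intro i hi
    constructor
    · rw [key i x hxS y hyS]; simp [hR, if_pos hi, rx, ry]
    · rw [key i y hyS x hxS]; simp [hR, if_pos hi, rx, ry]
  have hnonU_yx : ∀ i ∉ U, strictly (p' i) y x := by
    intro i hi
    constructor
    · rw [key i y hyS x hxS]; simp [hR, if_neg hi]
    · rw [key i x hxS y hyS]; simp [hR, if_neg hi, hxy]
  have hyz_all : ∀ i, strictly (p' i) y z := by
    intro i
    by_cases hi : i ∈ U
    · constructor
      · rw [key i y hyS z hzS]; simp [hR, if_pos hi, ry, rz]
      · rw [key i z hzS y hyS]; simp [hR, if_pos hi, ry, rz]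
    · constructor
      · rw [key i y hyS z hzS]; simp [hR, if_neg hi]
      · rw [key i z hzS y hyS]; simp [hR, if_neg hi, hyz.symm]
  have hst : strictly (σ p') x y := hD.2 p' hp' hUxy hnonU_yx
  have hwp : σ p' y z := hWP y z p' hp' hyz_all
  obtain ⟨htσ, hcσ⟩ := hSCS.2 p' hp'
  have hsxz : σ p' x z := htσ x y z hst.1 hwp
  have hnzx : ¬ σ p' z x := fun h => hst.2 (htσ y z x hwp h)
  -- xz agreement between p' and p
  have hagree : ∀ i, (p' i x z ↔ p i x z) ∧ (p' i z x ↔ p i z x) := by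
    intro i
    by_cases hi : i ∈ U
    · have h1i := h1 i hi
      constructor
      · rw [key i x hxS z hzS]
        simp only [hR, if_pos hi, rx, rz]
        exact ⟨fun _ => h1i.1, fun _ => by norm_num⟩
      · rw [key i z hzS x hxS]
        simp only [hR, if_pos hi, rx, rz]
        constructor
        · intro h; norm_num at h
        · intro h; exact absurd h h1i.2
    · constructor
      · rw [key i x hxS z hzS]; simp [hR, if_neg hi, hxy, hyz.symm]
      · rw [key i z hzS x hxS]; simp [hR, if_neg hi, hxy, hyz.symm]
  have hiia := hIIA x z p' hp' p hp hagree
  exact ⟨hiia.1.mp hsxz, fun h => hnzx (hiia.2.mpr h)⟩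

open Arrow in
theorem stmt_15 {A I : Type*}
    (D : Set (I → A → A → Prop)) (σ : (I → A → A → Prop) → (A → A → Prop))
    (hSCS : IsSCS D σ)
    (h3 : ∃ x y z : A, x ≠ y ∧ x ≠ z ∧ y ≠ z)
    (hUD : UD D) (hIIA : IIA D σ) (hWP : WeakPareto D σ) :
    ∀ (U : Set I) (a b : A), a ≠ b → (Decisive D σ U a b ↔ EDecisive D σ U a b) := by

  intro U a b hab
  constructor
  · intro hD
    obtain ⟨u, v, w, huv, huw, hvw⟩ := h3
    obtain ⟨c, hca, hcb⟩ : ∃ c, c ≠ a ∧ c ≠ b := by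
      rcases eq_or_ne u a with rfl | hua
      · rcases eq_or_ne v b with rfl | hvb
        · exact ⟨w, huw.symm, hvw.symm⟩
        · exact ⟨v, huv.symm, hvb⟩
      · rcases eq_or_ne u b with rfl | hub
        · rcases eq_or_ne v a with rfl | hva
          · exact ⟨w, hvw.symm, huw.symm⟩
          · exact ⟨v, hva, huv.symm⟩
        · exact ⟨u, hua, hub⟩
    have hEac : EDecisive D σ U a c :=
      arrow_aux1 hSCS hUD hIIA hWP hab hca.symm hcb.symm hD
    have hDac : Decisive D σ U a c :=
      ⟨hca.symm, fun p hp h1 _ => hEac p hp h1⟩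
    exact arrow_aux1 hSCS hUD hIIA hWP hca.symm hab hcb hDac
  · intro hE
    exact ⟨hab, fun p hp h1 _ => hE p hp h1⟩
end

section
/- Let (A, I, D, σ) be a social choice situation with |A| ≥ 3 satisfying UD, IIA, and Pareto (P). Then the family U := { U ⊆ I | ∃ a, b ∈ A. aD_Ub } of decisive sets is an ultrafilter on I. -/
open Arrow

section ArrowProof

variable {A I : Type*} {D : Set (I → A → A → Prop)} {σ : (I → A → A → Prop) → (A → A → Prop)}

theorem arrow_strict_iff' {R : A → A → Prop} {x y : A} {rx ry : ℕ}
    (h1 : R x y ↔ ry ≤ rx) (h2 : R y x ↔ rx ≤ ry) :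
    strictly R x y ↔ ry < rx := by
  unfold strictly; rw [h1, h2]; omega

theorem arrow_strict_weak_trans {R : A → A → Prop} (hR : IsWeakPref R) {a b c : A}
    (h1 : strictly R a b) (h2 : R b c) : strictly R a c :=
  ⟨hR.1 _ _ _ h1.1 h2, fun hca => h1.2 (hR.1 _ _ _ h2 hca)⟩

theorem arrow_strict_strict_trans {R : A → A → Prop} (hR : IsWeakPref R) {a b c : A}
    (h1 : strictly R a b) (h2 : strictly R b c) : strictly R a c :=
  arrow_strict_weak_trans hR h1 h2.1

theorem arrow_mk_prof (hUD : UD D) (a b c : A) (r : I → A → ℕ) :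
    ∃ p ∈ D, ∀ i, ∀ x ∈ ({a, b, c} : Set A), ∀ y ∈ ({a, b, c} : Set A),
      (p i x y ↔ r i y ≤ r i x) := by
  obtain ⟨p, hp, he⟩ := hUD a b c (fun i x y => r i y.1 ≤ r i x.1)
    (fun i => ⟨fun u v w h1 h2 => le_trans h2 h1, fun u v => le_total _ _⟩)
  refine ⟨p, hp, fun i x hx y hy => ?_⟩
  have h := congrFun (congrFun (he i) ⟨x, hx⟩) ⟨y, hy⟩
  exact iff_of_eq h

theorem arrow_transfer (hIIA : IIA D σ) {x y : A} {p q : I → A → A → Prop}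
    (hp : p ∈ D) (hq : q ∈ D)
    (h : ∀ i, (p i x y ↔ q i x y) ∧ (p i y x ↔ q i y x))
    (hs : strictly (σ p) x y) : strictly (σ q) x y := by
  obtain ⟨h1, h2⟩ := hIIA x y p hp q hq h
  exact ⟨h1.mp hs.1, fun h3 => hs.2 (h2.mpr h3)⟩

theorem arrow_agree_of_strict {R S : A → A → Prop} {x y : A}
    (hR : strictly R x y) (hS : strictly S x y) :
    (R x y ↔ S x y) ∧ (R y x ↔ S y x) :=
  ⟨iff_of_true hR.1 hS.1, iff_of_false hR.2 hS.2⟩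

theorem arrow_rank_match {P Q : Prop} [Decidable P] [Decidable Q] (hconn : P ∨ Q)
    {u v : ℕ} (huv : u < v) :
    ((if Q then v else u : ℕ) ≤ (if P then v else u) ↔ P) := by
  constructor
  · intro h
    by_contra hP
    rw [if_neg hP] at h
    have hQ : Q := hconn.resolve_left hP
    rw [if_pos hQ] at h
    omega
  · intro hP
    rw [if_pos hP]
    split <;> omega

theorem arrow_L1 (hSCS : IsSCS D σ) (hUD : UD D) (hIIA : IIA D σ) (hP : Pareto D σ)
    {U : Set I} {a b c : A} (hab : a ≠ b) (hac : a ≠ c) (hbc : b ≠ c)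
    (hU : Decisive D σ U a b) : EDecisive D σ U a c := by
  classical
  intro q hq hUq
  obtain ⟨F, hFa, hFb, hFc⟩ : ∃ F : I → A → ℕ,
      (∀ i, F i a = if i ∈ U then 2 else (if q i a c then 1 else 0)) ∧
      (∀ i, F i b = if i ∈ U then 1 else 2) ∧
      (∀ i, F i c = if i ∈ U then 0 else (if q i c a then 1 else 0)) :=
    ⟨fun i x => if x = a then (if i ∈ U then 2 else (if q i a c then 1 else 0))
      else if x = b then (if i ∈ U then 1 else 2)
      else (if i ∈ U then 0 else (if q i c a then 1 else 0)),
     fun i => by simp, fun i => by simp [Ne.symm hab],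
     fun i => by simp [Ne.symm hac, Ne.symm hbc]⟩
  obtain ⟨p, hp, hr⟩ := arrow_mk_prof hUD a b c F
  have ha : a ∈ ({a, b, c} : Set A) := by simp
  have hb : b ∈ ({a, b, c} : Set A) := by simp
  have hc : c ∈ ({a, b, c} : Set A) := by simp
  have hstrict : ∀ i, ∀ x ∈ ({a, b, c} : Set A), ∀ y ∈ ({a, b, c} : Set A),
      strictly (p i) x y ↔ F i y < F i x :=
    fun i x hx y hy => arrow_strict_iff' (hr i x hx y hy) (hr i y hy x hx)
  have spab : strictly (σ p) a b := hU.2 p hp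
    (fun i hi => (hstrict i a ha b hb).mpr (by
      rw [hFa i, hFb i]; simp only [if_pos hi]; omega))
    (fun i hi => (hstrict i b hb a ha).mpr (by
      rw [hFa i, hFb i]; simp only [if_neg hi]; split <;> omega))
  have spbc : strictly (σ p) b c := hP b c p hp (fun i => (hstrict i b hb c hc).mpr (by
    rw [hFb i, hFc i]
    by_cases hi : i ∈ U
    · simp only [if_pos hi]; omega
    · simp only [if_neg hi]; split <;> omega))
  have spac : strictly (σ p) a c := arrow_strict_strict_trans (hSCS.2 p hp) spab spbc
  refine arrow_transfer hIIA hp hq (fun i => ?_) spac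
  by_cases hi : i ∈ U
  · exact arrow_agree_of_strict ((hstrict i a ha c hc).mpr (by
      rw [hFa i, hFc i]; simp only [if_pos hi]; omega)) (hUq i hi)
  · have hconn := (hSCS.1 q hq i).2 a c
    constructor
    · rw [hr i a ha c hc, hFa i, hFc i]
      simp only [if_neg hi]
      exact arrow_rank_match hconn (by omega)
    · rw [hr i c hc a ha, hFa i, hFc i]
      simp only [if_neg hi]
      exact arrow_rank_match (Or.symm hconn) (by omega)

theorem arrow_L2 (hSCS : IsSCS D σ) (hUD : UD D) (hIIA : IIA D σ) (hP : Pareto D σ)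
    {U : Set I} {a b c : A} (hab : a ≠ b) (hac : a ≠ c) (hbc : b ≠ c)
    (hU : Decisive D σ U a b) : EDecisive D σ U c b := by
  classical
  intro q hq hUq
  obtain ⟨F, hFa, hFb, hFc⟩ : ∃ F : I → A → ℕ,
      (∀ i, F i a = if i ∈ U then 1 else 0) ∧
      (∀ i, F i b = if i ∈ U then 0 else (if q i b c then 2 else 1)) ∧
      (∀ i, F i c = if i ∈ U then 2 else (if q i c b then 2 else 1)) :=
    ⟨fun i x => if x = a then (if i ∈ U then 1 else 0)
      else if x = b then (if i ∈ U then 0 else (if q i b c then 2 else 1))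
      else (if i ∈ U then 2 else (if q i c b then 2 else 1)),
     fun i => by simp, fun i => by simp [Ne.symm hab],
     fun i => by simp [Ne.symm hac, Ne.symm hbc]⟩
  obtain ⟨p, hp, hr⟩ := arrow_mk_prof hUD a b c F
  have ha : a ∈ ({a, b, c} : Set A) := by simp
  have hb : b ∈ ({a, b, c} : Set A) := by simp
  have hc : c ∈ ({a, b, c} : Set A) := by simp
  have hstrict : ∀ i, ∀ x ∈ ({a, b, c} : Set A), ∀ y ∈ ({a, b, c} : Set A),
      strictly (p i) x y ↔ F i y < F i x :=
    fun i x hx y hy => arrow_strict_iff' (hr i x hx y hy) (hr i y hy x hx)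
  have spab : strictly (σ p) a b := hU.2 p hp
    (fun i hi => (hstrict i a ha b hb).mpr (by
      rw [hFa i, hFb i]; simp only [if_pos hi]; omega))
    (fun i hi => (hstrict i b hb a ha).mpr (by
      rw [hFa i, hFb i]; simp only [if_neg hi]; split <;> omega))
  have spca : strictly (σ p) c a := hP c a p hp (fun i => (hstrict i c hc a ha).mpr (by
    rw [hFa i, hFc i]
    by_cases hi : i ∈ U
    · simp only [if_pos hi]; omega
    · simp only [if_neg hi]; split <;> omega))
  have spcb : strictly (σ p) c b := arrow_strict_strict_trans (hSCS.2 p hp) spca spab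
  refine arrow_transfer hIIA hp hq (fun i => ?_) spcb
  by_cases hi : i ∈ U
  · exact arrow_agree_of_strict ((hstrict i c hc b hb).mpr (by
      rw [hFb i, hFc i]; simp only [if_pos hi]; omega)) (hUq i hi)
  · have hconn := (hSCS.1 q hq i).2 c b
    constructor
    · rw [hr i c hc b hb, hFb i, hFc i]
      simp only [if_neg hi]
      exact arrow_rank_match hconn (by omega)
    · rw [hr i b hb c hc, hFb i, hFc i]
      simp only [if_neg hi]
      exact arrow_rank_match (Or.symm hconn) (by omega)

theorem arrow_toDec {U : Set I} {x y : A} (hxy : x ≠ y) (h : EDecisive D σ U x y) :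
    Decisive D σ U x y :=
  ⟨hxy, fun p hp h1 _ => h p hp h1⟩

theorem arrow_spread (hSCS : IsSCS D σ) (hUD : UD D) (hIIA : IIA D σ) (hP : Pareto D σ)
    (h3 : ∃ x y z : A, x ≠ y ∧ x ≠ z ∧ y ≠ z)
    {U : Set I} {a b : A} (hU : Decisive D σ U a b) {x y : A} (hxy : x ≠ y) :
    EDecisive D σ U x y := by
  obtain ⟨x0, y0, z0, h1, h2, h3'⟩ := h3
  have hab := hU.1
  obtain ⟨c, hca, hcb⟩ : ∃ c : A, c ≠ a ∧ c ≠ b := by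
    by_cases e1 : x0 ≠ a ∧ x0 ≠ b
    · exact ⟨x0, e1⟩
    by_cases e2 : y0 ≠ a ∧ y0 ≠ b
    · exact ⟨y0, e2⟩
    by_cases e3 : z0 ≠ a ∧ z0 ≠ b
    · exact ⟨z0, e3⟩
    push_neg at e1 e2 e3
    exfalso
    by_cases f1 : x0 = a <;> by_cases f2 : y0 = a <;> by_cases f3 : z0 = a <;> simp_all
  have d1 : EDecisive D σ U a c := arrow_L1 hSCS hUD hIIA hP hab (Ne.symm hca) (Ne.symm hcb) hU
  have d2 : EDecisive D σ U c b := arrow_L2 hSCS hUD hIIA hP hab (Ne.symm hca) (Ne.symm hcb) hU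
  have d3 : EDecisive D σ U a b :=
    arrow_L1 hSCS hUD hIIA hP (Ne.symm hca) hab hcb (arrow_toDec (Ne.symm hca) d1)
  have d4 : EDecisive D σ U b c :=
    arrow_L2 hSCS hUD hIIA hP (Ne.symm hca) hab hcb (arrow_toDec (Ne.symm hca) d1)
  have d5 : EDecisive D σ U c a :=
    arrow_L1 hSCS hUD hIIA hP hcb hca (Ne.symm hab) (arrow_toDec hcb d2)
  have d6 : EDecisive D σ U b a :=
    arrow_L1 hSCS hUD hIIA hP (Ne.symm hcb) (Ne.symm hab) hca (arrow_toDec (Ne.symm hcb) d4)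
  have stepA : ∀ w, w ≠ a → EDecisive D σ U a w := by
    intro w hw
    by_cases hwb : w = b
    · exact hwb ▸ d3
    by_cases hwc : w = c
    · exact hwc ▸ d1
    · exact arrow_L1 hSCS hUD hIIA hP hab (Ne.symm hw) (Ne.symm hwb) hU
  by_cases hxa : x = a
  · subst hxa; exact stepA y (Ne.symm hxy)
  by_cases hya : y = a
  · subst hya
    by_cases hxb : x = b
    · exact hxb ▸ d6
    by_cases hxc : x = c
    · exact hxc ▸ d5
    · exact arrow_L2 hSCS hUD hIIA hP (Ne.symm hab) (Ne.symm hxb) (Ne.symm hxa)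
        (arrow_toDec (Ne.symm hab) d6)
  · exact arrow_L2 hSCS hUD hIIA hP (Ne.symm hya) (Ne.symm hxa) (Ne.symm hxy)
      (arrow_toDec (Ne.symm hya) (stepA y hya))

end ArrowProof
open Arrow in
theorem stmt_16 {A I : Type*}
    (D : Set (I → A → A → Prop)) (σ : (I → A → A → Prop) → (A → A → Prop))
    (hSCS : IsSCS D σ)
    (h3 : ∃ x y z : A, x ≠ y ∧ x ≠ z ∧ y ≠ z)
    (hUD : UD D) (hIIA : IIA D σ) (hP : Pareto D σ) :
    (Set.univ ∈ {U : Set I | ∃ a b : A, Decisive D σ U a b}) ∧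
    (∀ U V : Set I, (∃ a b : A, Decisive D σ U a b) → U ⊆ V →
      ∃ a b : A, Decisive D σ V a b) ∧
    (∀ U V : Set I, (∃ a b : A, Decisive D σ U a b) → (∃ a b : A, Decisive D σ V a b) →
      U ∩ V ≠ ∅) ∧
    (∀ S : Set I, (∃ a b : A, Decisive D σ S a b) ∨ (∃ a b : A, Decisive D σ Sᶜ a b)) := by
  classical
  refine ⟨?_, ?_, ?_, ?_⟩
  · -- univ is decisive
    obtain ⟨x, y, -, hxy, -, -⟩ := id h3
    show ∃ a b : A, Decisive D σ (Set.univ : Set I) a b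
    exact ⟨x, y, hxy, fun p hp h _ => hP x y p hp (fun i => h i (Set.mem_univ i))⟩
  · -- upward closed
    rintro U V ⟨a, b, hD⟩ hUV
    have hE : EDecisive D σ U a b := arrow_spread hSCS hUD hIIA hP h3 hD hD.1
    exact ⟨a, b, hD.1, fun p hp h1 _ => hE p hp (fun i hi => h1 i (hUV hi))⟩
  · -- no two disjoint decisive sets
    rintro U V ⟨a1, b1, hDU⟩ ⟨a2, b2, hDV⟩ hE
    obtain ⟨x0, y0, z0, hxy, -, -⟩ := id h3
    have EU : EDecisive D σ U x0 y0 := arrow_spread hSCS hUD hIIA hP h3 hDU hxy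
    have EV : EDecisive D σ V y0 x0 := arrow_spread hSCS hUD hIIA hP h3 hDV (Ne.symm hxy)
    obtain ⟨F, hFx, hFy⟩ : ∃ F : I → A → ℕ,
        (∀ i, F i x0 = if i ∈ U then 1 else 0) ∧
        (∀ i, F i y0 = if i ∈ U then 0 else 1) :=
      ⟨fun i x => if x = x0 then (if i ∈ U then 1 else 0) else (if i ∈ U then 0 else 1),
       fun i => by simp, fun i => by simp [Ne.symm hxy]⟩
    obtain ⟨p, hp, hr⟩ := arrow_mk_prof hUD x0 y0 y0 F
    have hx0 : x0 ∈ ({x0, y0, y0} : Set A) := by simp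
    have hy0 : y0 ∈ ({x0, y0, y0} : Set A) := by simp
    have hstrict : ∀ i, ∀ x ∈ ({x0, y0, y0} : Set A), ∀ y ∈ ({x0, y0, y0} : Set A),
        strictly (p i) x y ↔ F i y < F i x :=
      fun i x hx y hy => arrow_strict_iff' (hr i x hx y hy) (hr i y hy x hx)
    have s1 : strictly (σ p) x0 y0 := EU p hp (fun i hi =>
      (hstrict i x0 hx0 y0 hy0).mpr (by rw [hFx i, hFy i]; simp only [if_pos hi]; omega))
    have s2 : strictly (σ p) y0 x0 := EV p hp (fun i hi => by
      have hiU : i ∉ U := fun hiu => by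
        have : i ∈ U ∩ V := ⟨hiu, hi⟩
        rw [hE] at this
        exact this
      exact (hstrict i y0 hy0 x0 hx0).mpr (by rw [hFx i, hFy i]; simp only [if_neg hiU]; omega))
    exact s1.2 s2.1
  · -- S or Sᶜ is decisive
    intro S
    obtain ⟨a, b, c, hab, hac, hbc⟩ := id h3
    obtain ⟨F, hFa, hFb, hFc⟩ : ∃ F : I → A → ℕ,
        (∀ i, F i a = if i ∈ S then 2 else 1) ∧
        (∀ i, F i b = if i ∈ S then 1 else 0) ∧
        (∀ i, F i c = if i ∈ S then 0 else 2) :=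
      ⟨fun i x => if x = a then (if i ∈ S then 2 else 1)
        else if x = b then (if i ∈ S then 1 else 0) else (if i ∈ S then 0 else 2),
       fun i => by simp, fun i => by simp [Ne.symm hab],
       fun i => by simp [Ne.symm hac, Ne.symm hbc]⟩
    obtain ⟨p, hp, hr⟩ := arrow_mk_prof hUD a b c F
    have ha : a ∈ ({a, b, c} : Set A) := by simp
    have hb : b ∈ ({a, b, c} : Set A) := by simp
    have hc : c ∈ ({a, b, c} : Set A) := by simp
    have hstrict : ∀ i, ∀ x ∈ ({a, b, c} : Set A), ∀ y ∈ ({a, b, c} : Set A),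
        strictly (p i) x y ↔ F i y < F i x :=
      fun i x hx y hy => arrow_strict_iff' (hr i x hx y hy) (hr i y hy x hx)
    have spab : strictly (σ p) a b := hP a b p hp (fun i =>
      (hstrict i a ha b hb).mpr (by
        by_cases hi : i ∈ S
        · rw [hFa i, hFb i, if_pos hi, if_pos hi]; omega
        · rw [hFa i, hFb i, if_neg hi, if_neg hi]; omega))
    have hw := hSCS.2 p hp
    by_cases hyz : σ p b c
    · -- S decisive for (a, c)
      left
      have spac : strictly (σ p) a c := arrow_strict_weak_trans hw spab hyz
      refine ⟨a, c, hac, fun q hq h1 h2 => ?_⟩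
      refine arrow_transfer hIIA hp hq (fun i => ?_) spac
      by_cases hi : i ∈ S
      · exact arrow_agree_of_strict ((hstrict i a ha c hc).mpr (by
          rw [hFa i, hFc i]; simp only [if_pos hi]; omega)) (h1 i hi)
      · have pc : strictly (p i) c a := (hstrict i c hc a ha).mpr (by
          rw [hFa i, hFc i]; simp only [if_neg hi]; omega)
        have qc := h2 i hi
        exact ⟨iff_of_false pc.2 qc.2, iff_of_true pc.1 qc.1⟩
    · -- Sᶜ decisive for (c, b)
      right
      have scb : strictly (σ p) c b := ⟨(hw.2 b c).resolve_left hyz, hyz⟩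
      refine ⟨c, b, Ne.symm hbc, fun q hq h1 h2 => ?_⟩
      refine arrow_transfer hIIA hp hq (fun i => ?_) scb
      by_cases hi : i ∈ S
      · have hi' : i ∉ Sᶜ := by simp [hi]
        have pbc : strictly (p i) b c := (hstrict i b hb c hc).mpr (by
          rw [hFb i, hFc i]; simp only [if_pos hi]; omega)
        have qbc := h2 i hi'
        exact ⟨iff_of_false pbc.2 qbc.2, iff_of_true pbc.1 qbc.1⟩
      · have hi' : i ∈ Sᶜ := hi
        exact arrow_agree_of_strict ((hstrict i c hc b hb).mpr (by
          rw [hFb i, hFc i]; simp only [if_neg hi]; omega)) (h1 i hi')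
end

section
/- Let (A, I, D, σ) be a social choice situation with |A| ≥ 3 satisfying UD, IIA, and P, and let U be the ultrafilter of decisive sets. Then for all distinct a, b ∈ A and every profile p ∈ D whose restriction to {a,b} is linear (antisymmetric) for every individual: a is strictly socially preferred to b if and only if { i ∈ I | a is strictly preferred to b by individual i } ∈ U. -/
section ArrowAux
open Arrow
variable {A I : Type*}

lemma strict_trans' {R : A → A → Prop} (h : IsWeakPref R) {a b c : A}
    (h1 : strictly R a b) (h2 : strictly R b c) : strictly R a c :=
  ⟨h.1 a b c h1.1 h2.1, fun hca => h2.2 (h.1 c a b hca h1.1)⟩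

/-- Three-level linear order `t > (middle) > b` on a subset. -/
def lineRel (t b : A) (S : Set A) : S → S → Prop :=
  fun u v => u.1 = t ∨ v.1 = b ∨ u = v

lemma lineRel_weakPref {t m b : A} (htb : t ≠ b)
    {S : Set A} (hS : ∀ s ∈ S, s = t ∨ s = m ∨ s = b) :
    IsWeakPref (lineRel t b S) := by
  constructor
  · rintro u v w (h | h | h) hvw
    · exact Or.inl h
    · rcases hvw with h' | h' | h'
      · exact absurd (h'.symm.trans h) htb
      · exact Or.inr (Or.inl h')
      · exact Or.inr (Or.inl (h' ▸ h))
    · exact h ▸ hvw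
  · intro u v
    rcases hS u.1 u.2 with hu | hu | hu
    · exact Or.inl (Or.inl hu)
    · rcases hS v.1 v.2 with hv | hv | hv
      · exact Or.inr (Or.inl hv)
      · exact Or.inl (Or.inr (Or.inr (Subtype.ext (hu.trans hv.symm))))
      · exact Or.inl (Or.inr (Or.inl hv))
    · exact Or.inr (Or.inr (Or.inl hu))

lemma lineRel_strict_top {t b : A} (htb : t ≠ b) {S : Set A} {u v : S}
    (hu : u.1 = t) (hv : v.1 ≠ t) : strictly (lineRel t b S) u v := by
  refine ⟨Or.inl hu, ?_⟩
  rintro (h | h | h)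
  · exact hv h
  · exact htb (hu.symm.trans h)
  · exact hv (by rw [h]; exact hu)

lemma lineRel_strict_bot {t b : A} (htb : t ≠ b) {S : Set A} {u v : S}
    (hv : v.1 = b) (hu : u.1 ≠ b) : strictly (lineRel t b S) u v := by
  refine ⟨Or.inr (Or.inl hv), ?_⟩
  rintro (h | h | h)
  · exact htb (h.symm.trans hv)
  · exact hu h
  · exact hu (h ▸ hv)

/-- `t` on top, everything else ordered by `R`. -/
def topRel (t : A) (R : A → A → Prop) (S : Set A) : S → S → Prop :=
  fun u v => u.1 = t ∨ (u.1 ≠ t ∧ v.1 ≠ t ∧ R u.1 v.1)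

lemma topRel_weakPref {t : A} {R : A → A → Prop} (hR : IsWeakPref R) (S : Set A) :
    IsWeakPref (topRel t R S) := by
  constructor
  · rintro u v w (h | ⟨hu, hv, huv⟩) hvw
    · exact Or.inl h
    · rcases hvw with h' | ⟨_, hw, hvw⟩
      · exact absurd h' hv
      · exact Or.inr ⟨hu, hw, hR.1 _ _ _ huv hvw⟩
  · intro u v
    by_cases hu : u.1 = t
    · exact Or.inl (Or.inl hu)
    by_cases hv : v.1 = t
    · exact Or.inr (Or.inl hv)
    rcases hR.2 u.1 v.1 with h | h
    · exact Or.inl (Or.inr ⟨hu, hv, h⟩)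
    · exact Or.inr (Or.inr ⟨hv, hu, h⟩)

lemma topRel_iff {t : A} {R : A → A → Prop} {S : Set A} {u v : S}
    (hu : u.1 ≠ t) (hv : v.1 ≠ t) : topRel t R S u v ↔ R u.1 v.1 :=
  ⟨fun h => h.elim (fun h => absurd h hu) (fun h => h.2.2), fun h => Or.inr ⟨hu, hv, h⟩⟩

lemma topRel_strict_top {t : A} {R : A → A → Prop} {S : Set A} {u v : S}
    (hu : u.1 = t) (hv : v.1 ≠ t) : strictly (topRel t R S) u v := by
  refine ⟨Or.inl hu, ?_⟩
  rintro (h | ⟨_, h', _⟩)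
  · exact hv h
  · exact h' hu

/-- `b` on the bottom, everything else ordered by `R`. -/
def botRel (b : A) (R : A → A → Prop) (S : Set A) : S → S → Prop :=
  fun u v => v.1 = b ∨ (v.1 ≠ b ∧ u.1 ≠ b ∧ R u.1 v.1)

lemma botRel_weakPref {b : A} {R : A → A → Prop} (hR : IsWeakPref R) (S : Set A) :
    IsWeakPref (botRel b R S) := by
  constructor
  · rintro u v w huv (h' | ⟨hw, hv, hvw⟩)
    · exact Or.inl h'
    · rcases huv with h | ⟨_, hu, huv⟩
      · exact absurd h hv
      · exact Or.inr ⟨hw, hu, hR.1 _ _ _ huv hvw⟩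
  · intro u v
    by_cases hv : v.1 = b
    · exact Or.inl (Or.inl hv)
    by_cases hu : u.1 = b
    · exact Or.inr (Or.inl hu)
    rcases hR.2 u.1 v.1 with h | h
    · exact Or.inl (Or.inr ⟨hv, hu, h⟩)
    · exact Or.inr (Or.inr ⟨hu, hv, h⟩)

lemma botRel_iff {b : A} {R : A → A → Prop} {S : Set A} {u v : S}
    (hu : u.1 ≠ b) (hv : v.1 ≠ b) : botRel b R S u v ↔ R u.1 v.1 :=
  ⟨fun h => h.elim (fun h => absurd h hv) (fun h => h.2.2), fun h => Or.inr ⟨hv, hu, h⟩⟩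

lemma botRel_strict_bot {b : A} {R : A → A → Prop} {S : Set A} {u v : S}
    (hv : v.1 = b) (hu : u.1 ≠ b) : strictly (botRel b R S) u v := by
  refine ⟨Or.inl hv, ?_⟩
  rintro (h | ⟨_, h', _⟩)
  · exact hu h
  · exact h' hv

lemma restr_iff {R : A → A → Prop} {S : Set A} {q : S → S → Prop}
    (h : restr R S = q) {x y : A} (hx : x ∈ S) (hy : y ∈ S) :
    R x y ↔ q ⟨x, hx⟩ ⟨y, hy⟩ :=
  iff_of_eq (congrFun (congrFun h ⟨x, hx⟩) ⟨y, hy⟩)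

lemma restr_strict {R : A → A → Prop} {S : Set A} {q : S → S → Prop}
    (h : restr R S = q) {x y : A} (hx : x ∈ S) (hy : y ∈ S) :
    strictly R x y ↔ strictly q ⟨x, hx⟩ ⟨y, hy⟩ :=
  and_congr (restr_iff h hx hy) (not_congr (restr_iff h hy hx))

end ArrowAux

section ArrowMain
open Arrow
variable {A I : Type*}
variable (D : Set (I → A → A → Prop)) (σ : (I → A → A → Prop) → (A → A → Prop))

lemma step1 (hSCS : IsSCS D σ) (hUD : UD D) (hIIA : IIA D σ) (hP : Pareto D σ)
    {U : Set I} {x y z : A} (hzx : z ≠ x) (hzy : z ≠ y)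
    (hD : Decisive D σ U x y) : EDecisive D σ U x z := by
  classical
  obtain ⟨hxy, hDec⟩ := hD
  intro p hp h1
  have hxS : x ∈ ({x, y, z} : Set A) := by simp
  have hyS : y ∈ ({x, y, z} : Set A) := by simp
  have hzS : z ∈ ({x, y, z} : Set A) := by simp
  obtain ⟨p', hp', hres⟩ := hUD x y z
    (fun i => if i ∈ U then lineRel x z ({x, y, z} : Set A)
              else topRel y (p i) ({x, y, z} : Set A))
    (fun i => by
      by_cases hi : i ∈ U
      · rw [if_pos hi]
        refine lineRel_weakPref (m := y) hzx.symm ?_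
        intro s hs
        simp only [Set.mem_insert_iff, Set.mem_singleton_iff] at hs
        exact hs
      · rw [if_neg hi]
        exact topRel_weakPref (hSCS.1 p hp i) _)
  have hresU : ∀ i ∈ U, restr (p' i) ({x, y, z} : Set A) = lineRel x z ({x, y, z} : Set A) :=
    fun i hi => (hres i).trans (if_pos hi)
  have hresV : ∀ i ∉ U, restr (p' i) ({x, y, z} : Set A) = topRel y (p i) ({x, y, z} : Set A) :=
    fun i hi => (hres i).trans (if_neg hi)
  have hso1 : strictly (σ p') x y := by
    refine hDec p' hp' (fun i hi => ?_) (fun i hi => ?_)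
    · exact (restr_strict (hresU i hi) hxS hyS).mpr
        (lineRel_strict_top hzx.symm rfl (Ne.symm hxy))
    · exact (restr_strict (hresV i hi) hyS hxS).mpr (topRel_strict_top rfl hxy)
  have hso2 : strictly (σ p') y z := by
    refine hP y z p' hp' (fun i => ?_)
    by_cases hi : i ∈ U
    · exact (restr_strict (hresU i hi) hyS hzS).mpr
        (lineRel_strict_bot hzx.symm rfl (Ne.symm hzy))
    · exact (restr_strict (hresV i hi) hyS hzS).mpr (topRel_strict_top rfl hzy)
  have hso3 : strictly (σ p') x z := strict_trans' (hSCS.2 p' hp') hso1 hso2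
  have hiia := hIIA x z p' hp' p hp (fun i => by
    by_cases hi : i ∈ U
    · have h2 := h1 i hi
      have h3 : strictly (p' i) x z := (restr_strict (hresU i hi) hxS hzS).mpr
        (lineRel_strict_top hzx.symm rfl hzx)
      exact ⟨iff_of_true h3.1 h2.1, iff_of_false h3.2 h2.2⟩
    · have e1 : p' i x z ↔ p i x z :=
        ((restr_iff (hresV i hi) hxS hzS).trans (topRel_iff hxy hzy))
      have e2 : p' i z x ↔ p i z x :=
        ((restr_iff (hresV i hi) hzS hxS).trans (topRel_iff hzy hxy))
      exact ⟨e1, e2⟩)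
  exact ⟨hiia.1.mp hso3.1, fun h => hso3.2 (hiia.2.mpr h)⟩

lemma step2 (hSCS : IsSCS D σ) (hUD : UD D) (hIIA : IIA D σ) (hP : Pareto D σ)
    {U : Set I} {x y z : A} (hzx : z ≠ x) (hzy : z ≠ y)
    (hD : Decisive D σ U x y) : EDecisive D σ U z y := by
  classical
  obtain ⟨hxy, hDec⟩ := hD
  intro p hp h1
  have hxS : x ∈ ({x, y, z} : Set A) := by simp
  have hyS : y ∈ ({x, y, z} : Set A) := by simp
  have hzS : z ∈ ({x, y, z} : Set A) := by simp
  obtain ⟨p', hp', hres⟩ := hUD x y z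
    (fun i => if i ∈ U then lineRel z y ({x, y, z} : Set A)
              else botRel x (p i) ({x, y, z} : Set A))
    (fun i => by
      by_cases hi : i ∈ U
      · rw [if_pos hi]
        refine lineRel_weakPref (m := x) hzy ?_
        intro s hs
        simp only [Set.mem_insert_iff, Set.mem_singleton_iff] at hs
        tauto
      · rw [if_neg hi]
        exact botRel_weakPref (hSCS.1 p hp i) _)
  have hresU : ∀ i ∈ U, restr (p' i) ({x, y, z} : Set A) = lineRel z y ({x, y, z} : Set A) :=
    fun i hi => (hres i).trans (if_pos hi)
  have hresV : ∀ i ∉ U, restr (p' i) ({x, y, z} : Set A) = botRel x (p i) ({x, y, z} : Set A) :=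
    fun i hi => (hres i).trans (if_neg hi)
  have hso1 : strictly (σ p') x y := by
    refine hDec p' hp' (fun i hi => ?_) (fun i hi => ?_)
    · exact (restr_strict (hresU i hi) hxS hyS).mpr
        (lineRel_strict_bot hzy rfl hxy)
    · exact (restr_strict (hresV i hi) hyS hxS).mpr (botRel_strict_bot rfl (Ne.symm hxy))
  have hso2 : strictly (σ p') z x := by
    refine hP z x p' hp' (fun i => ?_)
    by_cases hi : i ∈ U
    · exact (restr_strict (hresU i hi) hzS hxS).mpr
        (lineRel_strict_top hzy rfl (Ne.symm hzx))
    · exact (restr_strict (hresV i hi) hzS hxS).mpr (botRel_strict_bot rfl hzx)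
  have hso3 : strictly (σ p') z y := strict_trans' (hSCS.2 p' hp') hso2 hso1
  have hiia := hIIA z y p' hp' p hp (fun i => by
    by_cases hi : i ∈ U
    · have h2 := h1 i hi
      have h3 : strictly (p' i) z y := (restr_strict (hresU i hi) hzS hyS).mpr
        (lineRel_strict_top hzy rfl (Ne.symm hzy))
      exact ⟨iff_of_true h3.1 h2.1, iff_of_false h3.2 h2.2⟩
    · have e1 : p' i z y ↔ p i z y :=
        ((restr_iff (hresV i hi) hzS hyS).trans (botRel_iff hzx (Ne.symm hxy)))
      have e2 : p' i y z ↔ p i y z :=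
        ((restr_iff (hresV i hi) hyS hzS).trans (botRel_iff (Ne.symm hxy) hzx))
      exact ⟨e1, e2⟩)
  exact ⟨hiia.1.mp hso3.1, fun h => hso3.2 (hiia.2.mpr h)⟩

lemma third_elem {x y z u v : A} (hxy : x ≠ y) (hxz : x ≠ z) (hyz : y ≠ z) :
    ∃ w : A, w ≠ u ∧ w ≠ v := by
  by_cases h1 : x = u ∨ x = v
  · by_cases h2 : y = u ∨ y = v
    · refine ⟨z, ?_, ?_⟩ <;> rintro rfl <;>
        rcases h1 with rfl | rfl <;> rcases h2 with rfl | rfl <;> simp_all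
    · push_neg at h2; exact ⟨y, h2⟩
  · push_neg at h1; exact ⟨x, h1⟩

lemma fieldExp (hSCS : IsSCS D σ) (hUD : UD D) (hIIA : IIA D σ) (hP : Pareto D σ)
    (hthird : ∀ u v : A, ∃ w : A, w ≠ u ∧ w ≠ v)
    {U : Set I} {x y : A} (hD : Decisive D σ U x y) :
    ∀ a b : A, a ≠ b → EDecisive D σ U a b := by
  have hxy := hD.1
  have toDec : ∀ {u v : A}, u ≠ v → EDecisive D σ U u v → Decisive D σ U u v :=
    fun huv hE => ⟨huv, fun p hp h1 _ => hE p hp h1⟩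
  have ext1 : ∀ {x' y' : A}, Decisive D σ U x' y' → ∀ c, c ≠ x' → EDecisive D σ U x' c := by
    intro x' y' hD' c hcx
    by_cases hcy : c = y'
    · subst hcy
      obtain ⟨w, hw1, hw2⟩ := hthird x' c
      have e1 := step1 D σ hSCS hUD hIIA hP hw1 hw2 hD'
      exact step1 D σ hSCS hUD hIIA hP hcx (fun h => hw2 h.symm)
        (toDec (Ne.symm hw1) e1)
    · exact step1 D σ hSCS hUD hIIA hP hcx hcy hD'
  have ext2 : ∀ {x' y' : A}, Decisive D σ U x' y' → ∀ c, c ≠ y' → EDecisive D σ U c y' := by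
    intro x' y' hD' c hcy
    by_cases hcx : c = x'
    · subst hcx
      obtain ⟨w, hw1, hw2⟩ := hthird c y'
      have e1 := step2 D σ hSCS hUD hIIA hP hw1 hw2 hD'
      exact step2 D σ hSCS hUD hIIA hP (fun h => hw1 h.symm) hcy
        (toDec hw2 e1)
    · exact step2 D σ hSCS hUD hIIA hP hcx hcy hD'
  intro a b hab
  by_cases hbx : b = x
  · by_cases hay : a = y
    · subst hbx; subst hay
      obtain ⟨w, hw1, hw2⟩ := hthird b a
      have e1 : EDecisive D σ U b w := ext1 hD w hw1
      have e2 : EDecisive D σ U a w :=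
        step2 D σ hSCS hUD hIIA hP hab (Ne.symm hw2)
          (toDec (Ne.symm hw1) e1)
      exact ext1 (toDec (Ne.symm hw2) e2) b hab.symm
    · have e1 : EDecisive D σ U a y := ext2 hD a hay
      have e2 : EDecisive D σ U a x := ext1 (toDec hay e1) x (by subst hbx; exact hab.symm)
      subst hbx; exact e2
  · have e1 : EDecisive D σ U x b := ext1 hD b hbx
    by_cases hax : a = x
    · subst hax; exact e1
    · exact ext2 (toDec (Ne.symm hbx) e1) a hab

end ArrowMain

open Arrow in
theorem stmt_17 {A I : Type*}
    (D : Set (I → A → A → Prop)) (σ : (I → A → A → Prop) → (A → A → Prop))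
    (hSCS : IsSCS D σ)
    (h3 : ∃ x y z : A, x ≠ y ∧ x ≠ z ∧ y ≠ z)
    (hUD : UD D) (hIIA : IIA D σ) (hP : Pareto D σ) :
    ∀ (a b : A), a ≠ b → ∀ p ∈ D,
      (∀ i, ∀ x y : ({a, b} : Set A), restr (p i) ({a, b} : Set A) x y →
        restr (p i) ({a, b} : Set A) y x → x = y) →
      (strictly (σ p) a b ↔
        {i : I | strictly (p i) a b} ∈ {U : Set I | ∃ x y : A, Decisive D σ U x y}) := by
  classical
  obtain ⟨x0, y0, z0, h01, h02, h03⟩ := h3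
  intro a b hab p hp hlin
  have hwp : ∀ i, IsWeakPref (p i) := hSCS.1 p hp
  have haS : a ∈ ({a, b} : Set A) := by simp
  have hbS : b ∈ ({a, b} : Set A) := by simp
  have hanti : ∀ i, p i a b → p i b a → False := fun i h h' =>
    hab (congrArg Subtype.val (hlin i ⟨a, haS⟩ ⟨b, hbS⟩ h h'))
  have hcomp : ∀ i, i ∉ {i | strictly (p i) a b} → strictly (p i) b a := by
    intro i hi
    rcases (hwp i).2 a b with h | h
    · exact absurd (⟨h, fun h' => hanti i h h'⟩ : strictly (p i) a b) hi
    · exact ⟨h, fun h' => hanti i h' h⟩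
  constructor
  · intro hσ
    refine ⟨a, b, hab, ?_⟩
    intro q hq hU hV
    have hiia := hIIA a b q hq p hp (fun i => by
      by_cases hi : i ∈ {i | strictly (p i) a b}
      · have h1 := hU i hi
        have h2 : strictly (p i) a b := hi
        exact ⟨iff_of_true h1.1 h2.1, iff_of_false h1.2 h2.2⟩
      · have h1 := hV i hi
        have h2 := hcomp i hi
        exact ⟨iff_of_false (fun h => h1.2 h) h2.2, iff_of_true h1.1 h2.1⟩)
    exact ⟨hiia.1.mpr hσ.1, fun h => hσ.2 (hiia.2.mp h)⟩
  · rintro ⟨x, y, hDxy⟩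
    have hE := fieldExp D σ hSCS hUD hIIA hP
      (fun u v => third_elem (u := u) (v := v) h01 h02 h03) hDxy a b hab
    exact hE p hp (fun i hi => hi)
end

section
/- Arrow's Theorem: Let (A, I, D, σ) be a social choice situation with |A| ≥ 3 and I finite, satisfying UD, IIA, and P. Then there is a dictator: some i ∈ I such that for all distinct a, b ∈ A and all profiles p ∈ D, if individual i strictly prefers a to b then a is strictly socially preferred to b. -/
namespace ArrowAux
open Arrow

variable {A I : Type*} {D : Set (I → A → A → Prop)} {σ : (I → A → A → Prop) → (A → A → Prop)}

lemma strict_weak_trans {R : A → A → Prop} (hW : IsWeakPref R) {a b c : A}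
    (h1 : strictly R a b) (h2 : R b c) : strictly R a c := by
  refine ⟨hW.1 a b c h1.1 h2, fun h => h1.2 (hW.1 b c a h2 h)⟩

lemma agree_of_strict {P Q : A → A → Prop} {a b : A}
    (h1 : strictly P a b) (h2 : strictly Q a b) :
    (P a b ↔ Q a b) ∧ (P b a ↔ Q b a) := by
  obtain ⟨h1a, h1b⟩ := h1; obtain ⟨h2a, h2b⟩ := h2
  exact ⟨by tauto, by tauto⟩

lemma pair_rank {P : A → A → Prop} {x y : A} (hc : P x y ∨ P y x) (k : ℕ)
    [Decidable (P x y)] [Decidable (P y x)] :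
    ((if P x y then k else k+1) ≤ (if P y x then k else k+1) ↔ P x y) ∧
    ((if P y x then k else k+1) ≤ (if P x y then k else k+1) ↔ P y x) := by
  split_ifs <;> simp_all

lemma buildProfile (hUD : UD D) (a b c : A) (r : I → A → ℕ) :
    ∃ p ∈ D, ∀ i, ∀ x, x ∈ ({a,b,c} : Set A) → ∀ y, y ∈ ({a,b,c} : Set A) →
      ((p i x y ↔ r i x ≤ r i y) ∧ (strictly (p i) x y ↔ r i x < r i y)) := by
  obtain ⟨p, hp, hres⟩ := hUD a b c (fun i => fun u v => r i u.1 ≤ r i v.1)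
    (fun i => ⟨fun u v w h1 h2 => le_trans h1 h2, fun u v => le_total _ _⟩)
  refine ⟨p, hp, fun i x hx y hy => ?_⟩
  have h1 : p i x y ↔ r i x ≤ r i y :=
    iff_of_eq (congrFun (congrFun (hres i) ⟨x, hx⟩) ⟨y, hy⟩)
  have h2 : p i y x ↔ r i y ≤ r i x :=
    iff_of_eq (congrFun (congrFun (hres i) ⟨y, hy⟩) ⟨x, hx⟩)
  refine ⟨h1, ?_⟩
  unfold strictly; rw [h1, h2]; omega

lemma exp1 (hSCS : IsSCS D σ) (hUD : UD D) (hIIA : IIA D σ) (hP : Pareto D σ)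
    {U : Set I} {a b c : A} (hab : a ≠ b) (hac : a ≠ c) (hbc : b ≠ c)
    (hgood : ∀ q ∈ D, (∀ i ∈ U, strictly (q i) a b) → (∀ i ∉ U, strictly (q i) b a) →
      strictly (σ q) a b) :
    EDecisive D σ U a c := by
  classical
  intro p hp hUp
  set r : I → A → ℕ := fun i x =>
    if i ∈ U then (if x = a then 0 else if x = b then 1 else 2)
    else (if x = b then 0 else if x = a then (if p i a c then 1 else 2)
          else (if p i c a then 1 else 2)) with hr
  obtain ⟨q, hq, hqr⟩ := buildProfile hUD a b c r
  have hma : a ∈ ({a,b,c}:Set A) := by simp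
  have hmb : b ∈ ({a,b,c}:Set A) := by simp
  have hmc : c ∈ ({a,b,c}:Set A) := by simp
  have hba : (b:A) ≠ a := hab.symm
  have hca : (c:A) ≠ a := hac.symm
  have hcb : (c:A) ≠ b := hbc.symm
  -- rank values
  have ria : ∀ i ∈ U, r i a = 0 := fun i hi => by simp [hr, hi]
  have rib : ∀ i ∈ U, r i b = 1 := fun i hi => by simp [hr, hi, hba]
  have ric : ∀ i ∈ U, r i c = 2 := fun i hi => by simp [hr, hi, hca, hcb]
  have roa : ∀ i ∉ U, r i a = (if p i a c then 1 else 2) := fun i hi => by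
    simp [hr, hi, hab]
  have rob : ∀ i ∉ U, r i b = 0 := fun i hi => by simp [hr, hi]
  have roc : ∀ i ∉ U, r i c = (if p i c a then 1 else 2) := fun i hi => by
    simp [hr, hi, hcb, hca]
  -- everyone strictly prefers b to c
  have hbc_all : ∀ i, strictly (q i) b c := by
    intro i
    rw [(hqr i b hmb c hmc).2]
    by_cases hi : i ∈ U
    · rw [rib i hi, ric i hi]; omega
    · rw [rob i hi, roc i hi]; split_ifs <;> omega
  have hσbc : strictly (σ q) b c := hP b c q hq hbc_all
  have hσab : strictly (σ q) a b := by
    refine hgood q hq (fun i hi => ?_) (fun i hi => ?_)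
    · rw [(hqr i a hma b hmb).2, ria i hi, rib i hi]; omega
    · rw [(hqr i b hmb a hma).2, rob i hi, roa i hi]; split_ifs <;> omega
  have hσac : strictly (σ q) a c :=
    strict_weak_trans (hSCS.2 q hq) hσab hσbc.1
  -- transfer back to p via IIA
  have hagree : ∀ i, (p i a c ↔ q i a c) ∧ (p i c a ↔ q i c a) := by
    intro i
    by_cases hi : i ∈ U
    · refine agree_of_strict (hUp i hi) ?_
      rw [(hqr i a hma c hmc).2, ria i hi, ric i hi]; omega
    · have h1 := (hqr i a hma c hmc).1
      have h2 := (hqr i c hmc a hma).1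
      rw [roa i hi, roc i hi] at h1 h2
      have hconn := ((hSCS.1 p hp i).2 a c)
      have := pair_rank (P := p i) (x := a) (y := c) hconn 1
      exact ⟨by rw [h1]; exact this.1.symm, by rw [h2]; exact this.2.symm⟩
  obtain ⟨e1, e2⟩ := hIIA a c p hp q hq hagree
  exact ⟨e1.mpr hσac.1, fun h => hσac.2 (e2.mp h)⟩

lemma exp2 (hSCS : IsSCS D σ) (hUD : UD D) (hIIA : IIA D σ) (hP : Pareto D σ)
    {U : Set I} {a b c : A} (hab : a ≠ b) (hac : a ≠ c) (hbc : b ≠ c)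
    (hgood : ∀ q ∈ D, (∀ i ∈ U, strictly (q i) a b) → (∀ i ∉ U, strictly (q i) b a) →
      strictly (σ q) a b) :
    EDecisive D σ U c b := by
  classical
  intro p hp hUp
  set r : I → A → ℕ := fun i x =>
    if i ∈ U then (if x = c then 0 else if x = a then 1 else 2)
    else (if x = a then 2 else if x = c then (if p i c b then 0 else 1)
          else (if p i b c then 0 else 1)) with hr
  obtain ⟨q, hq, hqr⟩ := buildProfile hUD a b c r
  have hma : a ∈ ({a,b,c}:Set A) := by simp
  have hmb : b ∈ ({a,b,c}:Set A) := by simp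
  have hmc : c ∈ ({a,b,c}:Set A) := by simp
  have hba : (b:A) ≠ a := hab.symm
  have hca : (c:A) ≠ a := hac.symm
  have hcb : (c:A) ≠ b := hbc.symm
  have ric : ∀ i ∈ U, r i c = 0 := fun i hi => by simp [hr, hi]
  have ria : ∀ i ∈ U, r i a = 1 := fun i hi => by simp [hr, hi, hac]
  have rib : ∀ i ∈ U, r i b = 2 := fun i hi => by simp [hr, hi, hba, hbc]
  have roa : ∀ i ∉ U, r i a = 2 := fun i hi => by simp [hr, hi]
  have roc : ∀ i ∉ U, r i c = (if p i c b then 0 else 1) := fun i hi => by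
    simp [hr, hi, hca]
  have rob : ∀ i ∉ U, r i b = (if p i b c then 0 else 1) := fun i hi => by
    simp [hr, hi, hba, hbc]
  -- everyone strictly prefers c to a
  have hca_all : ∀ i, strictly (q i) c a := by
    intro i
    rw [(hqr i c hmc a hma).2]
    by_cases hi : i ∈ U
    · rw [ric i hi, ria i hi]; omega
    · rw [roc i hi, roa i hi]; split_ifs <;> omega
  have hσca : strictly (σ q) c a := hP c a q hq hca_all
  have hσab : strictly (σ q) a b := by
    refine hgood q hq (fun i hi => ?_) (fun i hi => ?_)
    · rw [(hqr i a hma b hmb).2, ria i hi, rib i hi]; omega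
    · rw [(hqr i b hmb a hma).2, rob i hi, roa i hi]; split_ifs <;> omega
  have hσcb : strictly (σ q) c b :=
    strict_weak_trans (hSCS.2 q hq) hσca hσab.1
  have hagree : ∀ i, (p i c b ↔ q i c b) ∧ (p i b c ↔ q i b c) := by
    intro i
    by_cases hi : i ∈ U
    · refine agree_of_strict (hUp i hi) ?_
      rw [(hqr i c hmc b hmb).2, ric i hi, rib i hi]; omega
    · have h1 := (hqr i c hmc b hmb).1
      have h2 := (hqr i b hmb c hmc).1
      rw [roc i hi, rob i hi] at h1 h2
      have hconn := ((hSCS.1 p hp i).2 c b)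
      have := pair_rank (P := p i) (x := c) (y := b) hconn 0
      exact ⟨by rw [h1]; exact this.1.symm, by rw [h2]; exact this.2.symm⟩
  obtain ⟨e1, e2⟩ := hIIA c b p hp q hq hagree
  exact ⟨e1.mpr hσcb.1, fun h => hσcb.2 (e2.mp h)⟩

lemma third {x y z : A} (hxy : x ≠ y) (hxz : x ≠ z) (hyz : y ≠ z) (a b : A) :
    ∃ c : A, c ≠ a ∧ c ≠ b := by
  by_cases hx : x ≠ a ∧ x ≠ b
  · exact ⟨x, hx⟩
  by_cases hy : y ≠ a ∧ y ≠ b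
  · exact ⟨y, hy⟩
  refine ⟨z, ?_, ?_⟩ <;> push_neg at hx hy <;> by_cases h1 : x = a <;>
    by_cases h2 : y = a <;> by_cases h3 : x = b <;> by_cases h4 : y = b <;>
    subst_vars <;> tauto

lemma expAll (hSCS : IsSCS D σ) (hUD : UD D) (hIIA : IIA D σ) (hP : Pareto D σ)
    (h3 : ∃ x y z : A, x ≠ y ∧ x ≠ z ∧ y ≠ z)
    {U : Set I} {a b : A} (hab : a ≠ b) (hE : EDecisive D σ U a b) :
    ∀ x y : A, x ≠ y → EDecisive D σ U x y := by
  obtain ⟨x0, y0, z0, h1, h2, h3'⟩ := h3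
  have hEg : ∀ (a b : A), a ≠ b → EDecisive D σ U a b →
      ∀ q ∈ D, (∀ i ∈ U, strictly (q i) a b) → (∀ i ∉ U, strictly (q i) b a) →
      strictly (σ q) a b := fun a b _ hE q hq h _ => hE q hq h
  have key1 : ∀ y', y' ≠ a → EDecisive D σ U a y' := by
    intro y' hy'
    by_cases hyb : y' = b
    · subst hyb; exact hE
    · exact exp1 hSCS hUD hIIA hP hab (Ne.symm hy') (fun h => hyb h.symm)
        (hEg a b hab hE)
  intro x y hxy
  by_cases hxa : x = a
  · subst hxa; exact key1 y (Ne.symm hxy)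
  by_cases hya : y = a
  · rw [hya]
    obtain ⟨z, hza, hzx⟩ := third h1 h2 h3' a x
    have e1 : EDecisive D σ U a z := key1 z hza
    have e2 : EDecisive D σ U x z :=
      exp2 hSCS hUD hIIA hP (Ne.symm hza) (fun h => hxa h.symm) hzx
        (hEg a z (Ne.symm hza) e1)
    exact exp1 hSCS hUD hIIA hP (Ne.symm hzx) hxa hza (hEg x z (Ne.symm hzx) e2)
  · have e1 : EDecisive D σ U a y := key1 y hya
    exact exp2 hSCS hUD hIIA hP (fun h => hya h.symm) (fun h => hxa h.symm) (Ne.symm hxy)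
      (hEg a y (fun h => hya h.symm) e1)

/-- Transfer decisiveness observed in one profile to all profiles with the same pattern. -/
lemma decisive_of_profile (hIIA : IIA D σ) {U : Set I} {a b : A}
    {q : I → A → A → Prop} (hq : q ∈ D)
    (h1 : ∀ i ∈ U, strictly (q i) a b) (h2 : ∀ i ∉ U, strictly (q i) b a)
    (hσ : strictly (σ q) a b) :
    ∀ p ∈ D, (∀ i ∈ U, strictly (p i) a b) → (∀ i ∉ U, strictly (p i) b a) →
      strictly (σ p) a b := by
  intro p hp hp1 hp2
  have hagree : ∀ i, (p i a b ↔ q i a b) ∧ (p i b a ↔ q i b a) := by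
    intro i
    by_cases hi : i ∈ U
    · exact agree_of_strict (hp1 i hi) (h1 i hi)
    · obtain ⟨u1, u2⟩ := agree_of_strict (hp2 i hi) (h2 i hi)
      exact ⟨u2, u1⟩
  obtain ⟨e1, e2⟩ := hIIA a b p hp q hq hagree
  exact ⟨e1.mpr hσ.1, fun h => hσ.2 (e2.mp h)⟩

lemma contraction (hSCS : IsSCS D σ) (hUD : UD D) (hIIA : IIA D σ) (hP : Pareto D σ)
    {x y z : A} (hxy : x ≠ y) (hxz : x ≠ z) (hyz : y ≠ z)
    {U : Set I} (hU : ∀ a b : A, a ≠ b → EDecisive D σ U a b)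
    {i0 : I} (hi0 : i0 ∈ U) :
    (∀ a b : A, a ≠ b → EDecisive D σ ({i0} : Set I) a b) ∨
    (∀ a b : A, a ≠ b → EDecisive D σ (U \ {i0}) a b) := by
  classical
  have h3 : ∃ x y z : A, x ≠ y ∧ x ≠ z ∧ y ≠ z := ⟨x, y, z, hxy, hxz, hyz⟩
  set r : I → A → ℕ := fun i w =>
    if i = i0 then (if w = x then 0 else if w = y then 1 else 2)
    else if i ∈ U then (if w = y then 0 else if w = z then 1 else 2)
    else (if w = z then 0 else if w = x then 1 else 2) with hr
  obtain ⟨q, hq, hqr⟩ := buildProfile hUD x y z r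
  have hmx : x ∈ ({x,y,z}:Set A) := by simp
  have hmy : y ∈ ({x,y,z}:Set A) := by simp
  have hmz : z ∈ ({x,y,z}:Set A) := by simp
  have hW := hSCS.2 q hq
  -- ranks
  have r0x : r i0 x = 0 := by simp [hr]
  have r0y : r i0 y = 1 := by simp [hr, hxy.symm]
  have r0z : r i0 z = 2 := by simp [hr, hxz.symm, hyz.symm]
  have r1y : ∀ i, i ≠ i0 → i ∈ U → r i y = 0 := fun i h hi => by simp [hr, h, hi]
  have r1z : ∀ i, i ≠ i0 → i ∈ U → r i z = 1 := fun i h hi => by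
    simp [hr, h, hi, hyz.symm]
  have r1x : ∀ i, i ≠ i0 → i ∈ U → r i x = 2 := fun i h hi => by
    simp [hr, h, hi, hxy, hxz]
  have r2z : ∀ i, i ∉ U → r i z = 0 := fun i hi => by
    have hne : i ≠ i0 := fun h => hi (h ▸ hi0)
    simp [hr, hne, hi]
  have r2x : ∀ i, i ∉ U → r i x = 1 := fun i hi => by
    have hne : i ≠ i0 := fun h => hi (h ▸ hi0)
    simp [hr, hne, hi, hxz]
  have r2y : ∀ i, i ∉ U → r i y = 2 := fun i hi => by
    have hne : i ≠ i0 := fun h => hi (h ▸ hi0)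
    simp [hr, hne, hi, hyz, hxy.symm]
  -- all of U strictly prefer y to z, so society does
  have hσyz : strictly (σ q) y z := by
    refine hU y z hyz q hq (fun i hi => ?_)
    rw [(hqr i y hmy z hmz).2]
    by_cases h : i = i0
    · subst h; rw [r0y, r0z]; omega
    · rw [r1y i h hi, r1z i h hi]; omega
  by_cases hxzσ : strictly (σ q) x z
  · -- {i0} is decisive for x over z
    left
    have hdec : ∀ p ∈ D, (∀ i ∈ ({i0}:Set I), strictly (p i) x z) →
        (∀ i ∉ ({i0}:Set I), strictly (p i) z x) → strictly (σ p) x z := by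
      refine decisive_of_profile hIIA hq (fun i hi => ?_) (fun i hi => ?_) hxzσ
      · rw [Set.mem_singleton_iff] at hi
        rw [hi, (hqr i0 x hmx z hmz).2, r0x, r0z]; omega
      · rw [Set.mem_singleton_iff] at hi
        rw [(hqr i z hmz x hmx).2]
        by_cases hiU : i ∈ U
        · rw [r1z i hi hiU, r1x i hi hiU]; omega
        · rw [r2z i hiU, r2x i hiU]; omega
    have e1 : EDecisive D σ ({i0}:Set I) x y :=
      exp1 hSCS hUD hIIA hP hxz hxy hyz.symm hdec
    exact expAll hSCS hUD hIIA hP h3 hxy e1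
  · -- society strictly prefers y to x; U \ {i0} is decisive for y over x
    right
    have hzx : σ q z x := by
      rcases hW.2 x z with h | h
      · by_contra hno
        exact hxzσ ⟨h, fun hc => hno hc⟩
      · exact h
    have hσyx : strictly (σ q) y x := strict_weak_trans hW hσyz hzx
    have hdec : ∀ p ∈ D, (∀ i ∈ U \ {i0}, strictly (p i) y x) →
        (∀ i ∉ U \ {i0}, strictly (p i) x y) → strictly (σ p) y x := by
      refine decisive_of_profile hIIA hq (fun i hi => ?_) (fun i hi => ?_) hσyx
      · obtain ⟨hiU, hne⟩ := hi
        rw [Set.mem_singleton_iff] at hne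
        rw [(hqr i y hmy x hmx).2, r1y i hne hiU, r1x i hne hiU]; omega
      · rw [(hqr i x hmx y hmy).2]
        by_cases h : i = i0
        · subst h; rw [r0x, r0y]; omega
        · have hiU : i ∉ U := fun hc => hi ⟨hc, h⟩
          rw [r2x i hiU, r2y i hiU]; omega
    have e1 : EDecisive D σ (U \ {i0}) y z :=
      exp1 hSCS hUD hIIA hP (Ne.symm hxy) hyz hxz hdec
    exact expAll hSCS hUD hIIA hP h3 hyz e1

end ArrowAux

open Arrow in
theorem stmt_18 {A I : Type*} [Finite I]
    (D : Set (I → A → A → Prop)) (σ : (I → A → A → Prop) → (A → A → Prop))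
    (hSCS : IsSCS D σ)
    (h3 : ∃ x y z : A, x ≠ y ∧ x ≠ z ∧ y ≠ z)
    (hUD : UD D) (hIIA : IIA D σ) (hP : Pareto D σ) :
    ∃ i : I, ∀ a b : A, a ≠ b → ∀ p ∈ D, strictly (p i) a b → strictly (σ p) a b := by
  classical
  obtain ⟨x, y, z, hxy, hxz, hyz⟩ := h3
  cases isEmpty_or_nonempty I with
  | inl hI =>
    obtain ⟨p, hp, -⟩ := ArrowAux.buildProfile hUD x y z (fun _ _ => 0)
    have h1 := hP x y p hp (fun i => (hI.false i).elim)
    have h2 := hP y x p hp (fun i => (hI.false i).elim)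
    exact absurd h2.1 h1.2
  | inr hI =>
    have key : ∀ n : ℕ, ∀ U : Set I, U.Nonempty →
        (∀ a b : A, a ≠ b → EDecisive D σ U a b) → U.ncard ≤ n →
        ∃ i : I, ∀ a b : A, a ≠ b → EDecisive D σ ({i} : Set I) a b := by
      intro n
      induction n with
      | zero =>
        intro U hne hdec hcard
        have := (Set.ncard_pos (Set.toFinite U)).mpr hne
        omega
      | succ n ih =>
        intro U hne hdec hcard
        obtain ⟨i0, hi0⟩ := hne
        by_cases hsing : U = {i0}
        · subst hsing; exact ⟨i0, hdec⟩
        · rcases ArrowAux.contraction hSCS hUD hIIA hP hxy hxz hyz hdec hi0 with h | h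
          · exact ⟨i0, h⟩
          · refine ih (U \ {i0}) ?_ h ?_
            · by_contra hemp
              rw [Set.not_nonempty_iff_eq_empty, Set.diff_eq_empty] at hemp
              exact hsing (le_antisymm hemp (Set.singleton_subset_iff.mpr hi0))
            · have := Set.ncard_diff_singleton_lt_of_mem hi0 (Set.toFinite U)
              omega
    obtain ⟨i, hi⟩ := key (Set.ncard (Set.univ : Set I)) Set.univ Set.univ_nonempty
      (fun a b hab p hp h => hP a b p hp (fun j => h j (Set.mem_univ j))) le_rfl
    exact ⟨i, fun a b hab p hp hs => hi a b hab p hp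
      (fun j hj => by rw [Set.mem_singleton_iff] at hj; rw [hj]; exact hs)⟩
end
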